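/- arXiv:1407.5389 — 3 statements merged into one kernel-verified Lean document; each statement's English description precedes it below -/
import Mathlib

section
/- Let ψ₁,…,ψₙ be linearly independent unit vectors in an n-dimensional Hilbert space H, let ρ = ∑_i q_i |ψ_i⟩⟨ψ_i| with all q_i > 0, and define w_i = ρ^{-1/2} (√q_i ψ_i). Then (w_i)_{i=1}^n is an orthonormal basis of H. (That is, the pretty good measurement of a linearly independent pure state ensemble is a rank-one projective measurement.) -/
/-!
Write `φᵢ = √qᵢ ψᵢ`, so that `ρ = ∑ |φᵢ⟩⟨φᵢ|` and `wᵢ = S φᵢ`. Since `S` is symmetric,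
`∑ |wᵢ⟩⟨wᵢ| = S ρ S`, and `S ρ S = 1` because `S S ρ = 1` in finite dimension. Hence every
`v` satisfies `v = ∑ ⟪wᵢ, v⟫ wᵢ`. The `wᵢ` are linearly independent (`S` is invertible), so
comparing coefficients in `wⱼ = ∑ ⟪wᵢ, wⱼ⟫ wᵢ` gives `⟪wᵢ, wⱼ⟫ = δᵢⱼ`.
-/

/-- The rank-one operator `|x⟩⟨y| : v ↦ ⟪y, v⟫ • x`. -/
noncomputable def ketBra {H : Type*} [NormedAddCommGroup H] [InnerProductSpace ℂ H]
    (x y : H) : H →ₗ[ℂ] H :=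
  (innerₛₗ ℂ y).smulRight x

open Finset ComplexConjugate

section

variable {H : Type*} [NormedAddCommGroup H] [InnerProductSpace ℂ H]

@[simp]
theorem ketBra_apply (x y v : H) : ketBra x y v = inner ℂ y v • x := rfl

theorem ketBra_smul_smul (a b : ℂ) (x y : H) :
    ketBra (a • x) (b • y) = (a * conj b) • ketBra x y := by
  ext v
  simp only [ketBra_apply, inner_smul_left, LinearMap.smul_apply, smul_smul]
  ring_nf

theorem LinearMap.IsSymmetric.comp_ketBra_comp {S : H →ₗ[ℂ] H} (hS : S.IsSymmetric) (x y : H) :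
    S ∘ₗ ketBra x y ∘ₗ S = ketBra (S x) (S y) := by
  ext v
  simp [hS y v]

theorem sum_inner_smul_eq_self_of_sum_ketBra_eq_id {ι : Type*} [Fintype ι] {w : ι → H}
    (hw : ∑ i, ketBra (w i) (w i) = LinearMap.id) (v : H) :
    ∑ i, inner ℂ (w i) v • w i = v := by
  simpa using LinearMap.congr_fun hw v

theorem LinearIndependent.orthonormal_of_sum_ketBra_eq_id {ι : Type*} [Fintype ι]
    [DecidableEq ι] {w : ι → H} (hli : LinearIndependent ℂ w)
    (hw : ∑ i, ketBra (w i) (w i) = LinearMap.id) : Orthonormal ℂ w := by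
  refine orthonormal_iff_ite.mpr fun i j => ?_
  have hexpand : ∑ k, inner ℂ (w k) (w j) • w k = ∑ k, (if k = j then 1 else 0 : ℂ) • w k := by
    rw [sum_inner_smul_eq_self_of_sum_ketBra_eq_id hw]
    simp [ite_smul]
  exact Fintype.linearIndependent_iffₛ.mp hli _ _ hexpand i

end

theorem pgm_orthonormal_general {n : ℕ} {H : Type*} [NormedAddCommGroup H]
    [InnerProductSpace ℂ H] [FiniteDimensional ℂ H]
    (ψ : Fin n → H) (hLI : LinearIndependent ℂ ψ)
    (q : Fin n → ℝ) (hq : ∀ i, 0 < q i)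
    (ρ : H →ₗ[ℂ] H) (hρ : ρ = ∑ i, (q i : ℂ) • ketBra (ψ i) (ψ i))
    (S : H →ₗ[ℂ] H) (hSsymm : S.IsSymmetric)
    (hSinv : S ∘ₗ S ∘ₗ ρ = LinearMap.id)
    (w : Fin n → H) (hw : ∀ i, w i = S ((Real.sqrt (q i) : ℂ) • ψ i)) :
    Orthonormal ℂ w := by
  set φ : Fin n → H := fun i => (Real.sqrt (q i) : ℂ) • ψ i
  have hsqrt : ∀ i, (Real.sqrt (q i) : ℂ) ≠ 0 := fun i => by
    simpa using (Real.sqrt_pos.mpr (hq i)).ne'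
  have hρφ : ρ = ∑ i, ketBra (φ i) (φ i) := by
    refine hρ.trans (sum_congr rfl fun i _ => ?_)
    rw [ketBra_smul_smul, Complex.conj_ofReal, ← Complex.ofReal_mul,
      Real.mul_self_sqrt (hq i).le]
  have hSρS : S * ρ * S = 1 := (LinearMap.comp_eq_id_comm ℂ H).mp hSinv
  have hframe : ∑ i, ketBra (w i) (w i) = LinearMap.id := by
    simp only [hw, ← hSsymm.comp_ketBra_comp, ← Module.End.mul_eq_comp, ← mul_sum,
      ← sum_mul, ← hρφ, φ, ← mul_assoc]
    exact hSρS
  have hSinj : Function.Injective S := LinearMap.injective_of_comp_eq_id S (S * ρ) hSρS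
  have hli : LinearIndependent ℂ w := by
    rw [show w = S ∘ φ from funext hw]
    exact (hLI.units_smul fun i => Units.mk0 _ (hsqrt i)).map' S
      (LinearMap.ker_eq_bot.mpr hSinj)
  exact hli.orthonormal_of_sum_ketBra_eq_id hframe

/-- The pretty good measurement of an ensemble of linearly independent pure
states is a rank-one projective measurement: the vectors
`w i = ρ^{-1/2} (√qᵢ ψᵢ)` form an orthonormal basis. Here `S` plays the role of
`ρ^{-1/2}`: it is the (unique) symmetric positive operator with `S ∘ S ∘ ρ = 1`. -/
theorem pgm_orthonormal {n : ℕ} {H : Type*} [NormedAddCommGroup H]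
    [InnerProductSpace ℂ H] [FiniteDimensional ℂ H] (hdim : Module.finrank ℂ H = n)
    (ψ : Fin n → H) (hLI : LinearIndependent ℂ ψ) (hnorm : ∀ i, ‖ψ i‖ = 1)
    (q : Fin n → ℝ) (hq : ∀ i, 0 < q i)
    (ρ : H →ₗ[ℂ] H) (hρ : ρ = ∑ i, (q i : ℂ) • ketBra (ψ i) (ψ i))
    (S : H →ₗ[ℂ] H) (hSsymm : S.IsSymmetric)
    (hSpos : ∀ v : H, 0 ≤ RCLike.re (inner ℂ v (S v) : ℂ))
    (hSinv : S ∘ₗ S ∘ₗ ρ = LinearMap.id)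
    (w : Fin n → H) (hw : ∀ i, w i = S ((Real.sqrt (q i) : ℂ) • ψ i)) :
    Orthonormal ℂ w :=
  pgm_orthonormal_general ψ hLI q hq ρ hρ S hSsymm hSinv w hw
end

section
/- Let X be a positive definite n×n Hermitian matrix with positive diagonal D² (D = Diag(√X_{11},…,√X_{nn})), and let G be positive definite with X² = DGD. Define the linear map J on Hermitian matrices by J(δX) = (δX·X − D_δ D⁻¹ X²) + (δX·X − D_δ D⁻¹ X²)†, where D_δ = Diag(δx_{11}/(2√X_{11}),…) is the diagonal matrix with entries (D_δ)_{ii} = (δX)_{ii}/(2 d_{ii}). Then J is injective: J(δX) = 0 implies δX = 0. -/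
/-!
Put `S = D_δ D⁻¹ = Diag(δXᵢᵢ / (2 Xᵢᵢ))`. Since `S` and `X` are Hermitian, `J(δX) = 0` is the
Lyapunov equation `δX·X + X·δX = S X² + X² S`, and the choice of `S` makes
`tr(S δX) = 2 tr(S X S)`. With `W = δX − (X S + S X)` the Lyapunov equation becomes
`X W + W X = −2 X S X`, i.e. `W X⁻¹ + X⁻¹ W = −2 S`, and the trace identity becomes
`tr(S W) = 0`, i.e. `tr(W X⁻¹ W) = 0`. As `X⁻¹` is positive definite, `W = 0`; hence `S = 0`
and `δX = W + X S + S X = 0`.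
-/

open scoped ComplexOrder
open Matrix

namespace Matrix

lemma PosDef.eq_zero_of_trace_conjTranspose_mul_mul_eq_zero {𝕜 n m : Type*} [RCLike 𝕜]
    [Fintype n] [Fintype m] {A : Matrix n n 𝕜} {B : Matrix n m 𝕜} (hA : A.PosDef)
    (h : (Bᴴ * A * B).trace = 0) : B = 0 := by
  have hBAB : Bᴴ * A * B = 0 :=
    (hA.posSemidef.conjTranspose_mul_mul_same B).trace_eq_zero_iff.mp h
  refine ext_iff_mulVec.mpr fun v => ?_
  rw [zero_mulVec]
  by_contra hv
  have := hA.dotProduct_mulVec_pos hv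
  rwa [star_mulVec, dotProduct_mulVec, vecMul_vecMul, ← dotProduct_mulVec, mulVec_mulVec, hBAB,
    zero_mulVec, dotProduct_zero, lt_self_iff_false] at this

lemma lyapunov_eq_of_add_conjTranspose_eq_zero {R n : Type*} [Ring R] [StarRing R] [Fintype n]
    {X S Y : Matrix n n R} (hX : X.IsHermitian) (hS : S.IsHermitian) (hY : Y.IsHermitian)
    (h : (Y * X - S * (X * X)) + (Y * X - S * (X * X))ᴴ = 0) :
    Y * X + X * Y = S * (X * X) + (X * X) * S := by
  rw [conjTranspose_sub, conjTranspose_mul, conjTranspose_mul, conjTranspose_mul, hX.eq, hS.eq,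
    hY.eq] at h
  rw [← sub_eq_zero, ← h]
  noncomm_ring

lemma mul_inv_add_inv_mul_of_lyapunov_eq {R n : Type*} [CommRing R] [Fintype n]
    [DecidableEq n] {X S Y : Matrix n n R} (hX : IsUnit X.det)
    (h : Y * X + X * Y = S * (X * X) + (X * X) * S) :
    (Y - (X * S + S * X)) * X⁻¹ + X⁻¹ * (Y - (X * S + S * X)) = -(S + S) := by
  have hanticomm : X * (Y - (X * S + S * X)) + (Y - (X * S + S * X)) * X = -(X * S * X + X * S * X) :=
    calc _ = (Y * X + X * Y) - (S * (X * X) + (X * X) * S) - (X * S * X + X * S * X) := by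
          noncomm_ring
      _ = _ := by rw [h, sub_self, zero_sub]
  simpa only [Matrix.mul_add, Matrix.add_mul, Matrix.mul_neg, Matrix.neg_mul, Matrix.mul_assoc,
    nonsing_inv_mul_cancel_left _ _ hX, mul_nonsing_inv _ hX, Matrix.mul_one]
    using congrArg (fun M => X⁻¹ * M * X⁻¹) hanticomm

lemma eq_zero_of_lyapunov_eq_of_trace_eq {𝕜 n : Type*} [RCLike 𝕜] [Fintype n] [DecidableEq n]
    {X S Y : Matrix n n 𝕜} (hX : X.PosDef) (hS : S.IsHermitian) (hY : Y.IsHermitian)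
    (hL : Y * X + X * Y = S * (X * X) + (X * X) * S)
    (htr : (S * Y).trace = 2 * (S * X * S).trace) : Y = 0 := by
  set W := Y - (X * S + S * X)
  have hYW : Y = W + (X * S + S * X) := by simp [W]
  have hWh : Wᴴ = W := by
    simp only [W, conjTranspose_sub, conjTranspose_add, conjTranspose_mul, hX.1.eq, hS.eq, hY.eq,
      add_comm]
  have hSW : W * X⁻¹ + X⁻¹ * W = -(S + S) :=
    mul_inv_add_inv_mul_of_lyapunov_eq ((isUnit_iff_isUnit_det X).mp hX.isUnit) hL
  have htrSW : (S * W).trace = 0 := by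
    have : (S * Y).trace = (S * W).trace + 2 * (S * X * S).trace := by
      rw [hYW, Matrix.mul_add, Matrix.mul_add, trace_add, trace_add, trace_mul_comm S (S * X),
        ← Matrix.mul_assoc]
      ring
    rwa [this, add_eq_right] at htr
  have htrW : (Wᴴ * X⁻¹ * W).trace = 0 := by
    have h := calc
      2 * (Wᴴ * X⁻¹ * W).trace = (W * (W * X⁻¹ + X⁻¹ * W)).trace := by
        rw [hWh, Matrix.mul_add, trace_add, trace_mul_comm W (W * X⁻¹), ← Matrix.mul_assoc W X⁻¹ W]
        ring
      _ = 0 := by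
        rw [hSW, Matrix.mul_neg, trace_neg, Matrix.mul_add, trace_add, trace_mul_comm W S, htrSW,
          add_zero, neg_zero]
    simpa using h
  have hW0 : W = 0 := hX.inv.eq_zero_of_trace_conjTranspose_mul_mul_eq_zero htrW
  have hS0 : S = 0 := by
    rw [hW0, Matrix.zero_mul, Matrix.mul_zero, add_zero, eq_comm, neg_eq_zero, ← two_smul 𝕜 S,
      smul_eq_zero] at hSW
    exact hSW.resolve_left two_ne_zero
  simp [hYW, hW0, hS0]

/-- `D_δ D⁻¹`, where `D = Diag(√Xᵢᵢ)` and `D_δ` is its derivative in the direction `Y`. -/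
def logDerivSqrtDiag {K n : Type*} [Field K] [DecidableEq n] (X Y : Matrix n n K) :
    Matrix n n K :=
  diagonal fun i => Y i i / (2 * X i i)

lemma isHermitian_logDerivSqrtDiag {𝕜 n : Type*} [RCLike 𝕜] [DecidableEq n]
    {X Y : Matrix n n 𝕜} (hX : X.IsHermitian) (hY : Y.IsHermitian) :
    (logDerivSqrtDiag X Y).IsHermitian := by
  refine isHermitian_diagonal_of_self_adjoint _ (funext fun i => ?_)
  simp [star_div₀, hX.apply, hY.apply]

lemma trace_logDerivSqrtDiag_mul {K n : Type*} [Field K] [Fintype n] [DecidableEq n]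
    (X Y : Matrix n n K) :
    (logDerivSqrtDiag X Y * Y).trace =
      2 * (logDerivSqrtDiag X Y * X * logDerivSqrtDiag X Y).trace := by
  simp only [trace, diag, logDerivSqrtDiag, diagonal_mul, mul_diagonal, Finset.mul_sum]
  refine Finset.sum_congr rfl fun i _ => ?_
  rcases eq_or_ne (2 * X i i) 0 with h | h
  · simp [h]
  · field_simp

end Matrix

theorem jacobian_injective_general {n : ℕ} {X : Matrix (Fin n) (Fin n) ℂ}
    (hX : X.PosDef)
    (d : Fin n → ℝ) (hdiag : ∀ i, X i i = ((d i : ℂ))^2) :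
    ∀ δX : Matrix (Fin n) (Fin n) ℂ, δX.IsHermitian →
      (let M := δX * X -
        (Matrix.diagonal fun i => δX i i / (2 * ((d i : ℂ))^2)) * (X * X);
       M + M.conjTranspose = 0) → δX = 0 := by
  intro δX hδX hJ
  have hD : (diagonal fun i => δX i i / (2 * ((d i : ℂ))^2)) = logDerivSqrtDiag X δX := by
    simp only [logDerivSqrtDiag, hdiag]
  rw [hD] at hJ
  have hSh := isHermitian_logDerivSqrtDiag hX.1 hδX
  exact eq_zero_of_lyapunov_eq_of_trace_eq hX hSh hδX
    (lyapunov_eq_of_add_conjTranspose_eq_zero hX.1 hSh hδX hJ) (trace_logDerivSqrtDiag_mul X δX)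

/-- Nonsingularity of the Jacobian `J` of `X ↦ X² − D(X) G D(X)` at the optimal
point: `J(δX) = (δX·X − D_δ D⁻¹ X²) + (δX·X − D_δ D⁻¹ X²)†` vanishes only at
`δX = 0`, where `(D_δ D⁻¹)_{ii} = (δX)_{ii}/(2 dᵢᵢ²)`. -/
theorem jacobian_injective {n : ℕ} {G X : Matrix (Fin n) (Fin n) ℂ}
    (hG : G.PosDef) (hX : X.PosDef)
    (d : Fin n → ℝ) (hd : ∀ i, 0 < d i) (hdiag : ∀ i, X i i = ((d i : ℂ))^2)
    (hXsq : X * X =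
      (Matrix.diagonal fun i => (d i : ℂ)) * G * (Matrix.diagonal fun i => (d i : ℂ))) :
    ∀ δX : Matrix (Fin n) (Fin n) ℂ, δX.IsHermitian →
      (let M := δX * X -
        (Matrix.diagonal fun i => δX i i / (2 * ((d i : ℂ))^2)) * (X * X);
       M + M.conjTranspose = 0) → δX = 0 :=
  jacobian_injective_general hX d hdiag
end

section
/- Let X be positive definite with eigendecomposition X = ∑ g_i |g_i⟩⟨g_i|, and let δX be Hermitian and Δ a real diagonal matrix such that δX·X − Δ·X² is anti-Hermitian. Then ⟨g_i| δX |g_j⟩ = ((g_i² + g_j²)/(g_i + g_j)) · ⟨g_i| Δ |g_j⟩ for all i, j; consequently δX = ∑_{i,j} ((g_i²+g_j²)/(g_i+g_j)) ⟨g_i|Δ|g_j⟩ |g_i⟩⟨g_j|. In particular, if Δ = 0 then δX = 0. -/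
/-!
Sandwich the anti-Hermitian matrix `M = δX·X − Δ·X²` between eigenvectors `|gᵢ⟩`, `|gⱼ⟩` of `X`:
`⟨gᵢ|M|gⱼ⟩ = gⱼ⟨gᵢ|δX|gⱼ⟩ − gⱼ²⟨gᵢ|Δ|gⱼ⟩`, and since `δX` and `Δ` are Hermitian,
`⟨gⱼ|M|gᵢ⟩^* = gᵢ⟨gᵢ|δX|gⱼ⟩ − gᵢ²⟨gᵢ|Δ|gⱼ⟩`. Anti-Hermiticity says the two add up to zero,
and `gᵢ + gⱼ > 0` lets us divide. The expansion of `δX` is the completeness relation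
`∑ᵢ |gᵢ⟩⟨gᵢ| = 1` inserted on both sides of `δX`.
-/

open Matrix

namespace Matrix

variable {ι R : Type*} [Fintype ι] [CommRing R] [StarRing R]

theorem star_dotProduct_mulVec_conjTranspose (A : Matrix ι ι R) (x y : ι → R) :
    star x ⬝ᵥ (Aᴴ *ᵥ y) = star (star y ⬝ᵥ (A *ᵥ x)) := by
  rw [star_dotProduct, star_mulVec, conjTranspose_conjTranspose, dotProduct_mulVec]

theorem IsHermitian.star_dotProduct_mulVec {A : Matrix ι ι R} (hA : A.IsHermitian)
    (x y : ι → R) :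
    star (star y ⬝ᵥ (A *ᵥ x)) = star x ⬝ᵥ (A *ᵥ y) := by
  rw [← star_dotProduct_mulVec_conjTranspose, hA.eq]

theorem add_mul_dotProduct_mulVec_eq_of_antiHermitian {B Δ X : Matrix ι ι R}
    (hB : B.IsHermitian) (hΔ : Δ.IsHermitian)
    (hanti : (B * X - Δ * (X * X))ᴴ = -(B * X - Δ * (X * X)))
    {x y : ι → R} {a b : R} (ha : IsSelfAdjoint a) (hx : X *ᵥ x = a • x) (hy : X *ᵥ y = b • y) :
    (a + b) * (star x ⬝ᵥ (B *ᵥ y)) = (a ^ 2 + b ^ 2) * (star x ⬝ᵥ (Δ *ᵥ y)) := by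
  have hM : ∀ {z : ι → R} {c : R}, X *ᵥ z = c • z →
      (B * X - Δ * (X * X)) *ᵥ z = c • (B *ᵥ z) - c ^ 2 • (Δ *ᵥ z) := by
    intro z c hz
    simp only [sub_mulVec, ← mulVec_mulVec, hz, mulVec_smul, smul_smul, sq]
  have h := star_dotProduct_mulVec_conjTranspose (B * X - Δ * (X * X)) x y
  rw [hanti, neg_mulVec, hM hy, hM hx] at h
  simp only [dotProduct_neg, dotProduct_sub, dotProduct_smul, smul_eq_mul, star_sub, star_mul',
    star_pow, ha.star_eq, hB.star_dotProduct_mulVec, hΔ.star_dotProduct_mulVec] at h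
  linear_combination -h

variable [DecidableEq ι] {v : ι → ι → R}

theorem sum_vecMulVec_star_eq_one (hv : ∀ i j, star (v i) ⬝ᵥ v j = if i = j then 1 else 0) :
    ∑ i, vecMulVec (v i) (star (v i)) = 1 := by
  set U : Matrix ι ι R := (of v)ᵀ
  have hU : Uᴴ * U = 1 := by
    ext i j
    simpa [U, mul_apply, one_apply, dotProduct] using hv i j
  have hU' : U * Uᴴ = 1 := mul_eq_one_comm.mp hU
  rw [← hU']
  ext k l
  simp [U, mul_apply, vecMulVec_apply, Matrix.sum_apply]

theorem mulVec_eq_smul_of_eq_sum_vecMulVec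
    (hv : ∀ i j, star (v i) ⬝ᵥ v j = if i = j then 1 else 0)
    {g : ι → R} {X : Matrix ι ι R} (hX : X = ∑ i, g i • vecMulVec (v i) (star (v i))) (j : ι) :
    X *ᵥ v j = g j • v j := by
  simp [hX, sum_mulVec, smul_mulVec, vecMulVec_mulVec, hv]

theorem eq_sum_dotProduct_mulVec_smul_vecMulVec
    (hv : ∀ i j, star (v i) ⬝ᵥ v j = if i = j then 1 else 0) (A : Matrix ι ι R) :
    A = ∑ i, ∑ j, (star (v i) ⬝ᵥ (A *ᵥ v j)) • vecMulVec (v i) (star (v j)) := by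
  calc A = (∑ i, vecMulVec (v i) (star (v i))) * A * ∑ j, vecMulVec (v j) (star (v j)) := by
        rw [sum_vecMulVec_star_eq_one hv, Matrix.one_mul, Matrix.mul_one]
    _ = _ := by
        simp only [Finset.sum_mul, Finset.mul_sum]
        rw [Finset.sum_comm]
        refine Finset.sum_congr rfl fun i _ => Finset.sum_congr rfl fun j _ => ?_
        rw [vecMulVec_mul, vecMulVec_mul_vecMulVec, ← dotProduct_mulVec, vecMulVec_smul]

end Matrix

/-- If `δX·X − Δ·X²` is anti-Hermitian, where `X = ∑ᵢ gᵢ |gᵢ⟩⟨gᵢ|` is positive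
definite and `Δ` is real diagonal, then
`⟨gᵢ|δX|gⱼ⟩ = ((gᵢ²+gⱼ²)/(gᵢ+gⱼ)) ⟨gᵢ|Δ|gⱼ⟩` for all `i, j`; consequently
`δX = ∑ᵢⱼ ((gᵢ²+gⱼ²)/(gᵢ+gⱼ)) ⟨gᵢ|Δ|gⱼ⟩ |gᵢ⟩⟨gⱼ|`, and `Δ = 0` forces `δX = 0`. -/
theorem antiHermitian_constraint {n : ℕ} (g : Fin n → ℝ) (hg : ∀ i, 0 < g i)
    (v : Fin n → Fin n → ℂ)
    (hortho : ∀ i j, (∑ k, (starRingEnd ℂ) (v i k) * v j k) = if i = j then 1 else 0)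
    (X : Matrix (Fin n) (Fin n) ℂ)
    (hX : ∀ k l, X k l = ∑ i, (g i : ℂ) * v i k * (starRingEnd ℂ) (v i l))
    (δX : Matrix (Fin n) (Fin n) ℂ) (hδX : δX.IsHermitian)
    (δ : Fin n → ℝ) (Δ : Matrix (Fin n) (Fin n) ℂ)
    (hΔ : Δ = Matrix.diagonal fun i => (δ i : ℂ))
    (hanti : (δX * X - Δ * (X * X)).conjTranspose = -(δX * X - Δ * (X * X))) :
    (∀ i j, star (v i) ⬝ᵥ (δX *ᵥ v j) =
      ((((g i)^2 + (g j)^2) / (g i + g j) : ℝ) : ℂ) * (star (v i) ⬝ᵥ (Δ *ᵥ v j))) ∧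
    δX = ∑ i, ∑ j, (((((g i)^2 + (g j)^2) / (g i + g j) : ℝ) : ℂ) *
      (star (v i) ⬝ᵥ (Δ *ᵥ v j))) • Matrix.vecMulVec (v i) (star (v j)) ∧
    (Δ = 0 → δX = 0) := by
  have hv : ∀ i j, star (v i) ⬝ᵥ v j = if i = j then 1 else 0 := hortho
  have hXv := mulVec_eq_smul_of_eq_sum_vecMulVec hv (g := fun i => (g i : ℂ)) (X := X) <| by
    ext k l
    simp [hX, Matrix.sum_apply, vecMulVec_apply, mul_assoc]
  have hΔH : Δ.IsHermitian :=
    hΔ ▸ isHermitian_diagonal_of_self_adjoint _ (funext fun i => Complex.conj_ofReal (δ i))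
  have hsandwich : ∀ i j, star (v i) ⬝ᵥ (δX *ᵥ v j) =
      ((((g i)^2 + (g j)^2) / (g i + g j) : ℝ) : ℂ) * (star (v i) ⬝ᵥ (Δ *ᵥ v j)) := by
    intro i j
    have hgij : (g i : ℂ) + g j ≠ 0 := by exact_mod_cast (add_pos (hg i) (hg j)).ne'
    push_cast
    rw [div_mul_eq_mul_div, eq_div_iff hgij]
    linear_combination add_mul_dotProduct_mulVec_eq_of_antiHermitian hδX hΔH hanti
      (Complex.conj_ofReal (g i)) (hXv i) (hXv j)
  have hrecon := eq_sum_dotProduct_mulVec_smul_vecMulVec hv δX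
  simp_rw [hsandwich] at hrecon
  exact ⟨hsandwich, hrecon, fun hΔ0 => by simpa [hΔ0] using hrecon⟩
end
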